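/- For every n ≥ 2, the chromatic number of the n-dimensional simple permutoassociahedron satisfies δ_n = α_{n−1} + 1, where α_{n−1} is the chromatic number of the (n−1)-dimensional associahedron. -/

import Mathlib

/-- A segment of `[n]₀ = {0,...,n}`: a set `[a,b] = {x : a ≤ x ≤ b}` with
`0 ≤ a ≤ b ≤ n` that is a proper subset of `[n]₀`. -/
def IsSegment (n : ℕ) (S : Finset ℕ) : Prop :=
  ∃ a b : ℕ, a ≤ b ∧ b ≤ n ∧ S = Finset.Icc a b ∧ S ⊂ Finset.range (n + 1)

/-- The segment `[a,b]` precedes the segment `[c,d]` when `a+1 ≤ c ≤ b+1` and `b < d`. -/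
def SegPrecedes (n : ℕ) (S T : Finset ℕ) : Prop :=
  ∃ a b c d : ℕ, a ≤ b ∧ b ≤ n ∧ c ≤ d ∧ d ≤ n ∧
    S = Finset.Icc a b ∧ T = Finset.Icc c d ∧ a + 1 ≤ c ∧ c ≤ b + 1 ∧ b < d

/-- Two segments are separated when one of them precedes the other. -/
def SegSeparated (n : ℕ) (S T : Finset ℕ) : Prop :=
  SegPrecedes n S T ∨ SegPrecedes n T S

/-- A proper colouring of the `n`-dimensional associahedron with `m` colours:
a function from the segments of `[n]₀` to `{1,...,m}` such that any two distinct
segments of the same colour are separated. -/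
def IsProperColouringAssoc (n m : ℕ) (f : Finset ℕ → ℕ) : Prop :=
  (∀ S, IsSegment n S → f S ∈ Finset.Icc 1 m) ∧
  ∀ S T, IsSegment n S → IsSegment n T → S ≠ T → f S = f T → SegSeparated n S T

/-- The chromatic number `α_n` of the `n`-dimensional associahedron: the least `m`
for which a proper colouring with `m` colours exists. -/
noncomputable def assocChromatic (n : ℕ) : ℕ :=
  sInf {m : ℕ | ∃ f : Finset ℕ → ℕ, IsProperColouringAssoc n m f}

/-- Membership in `𝓑₁`: `A` is a chain `S₀ ⊂ S₁ ⊂ ⋯ ⊂ S_l` of nonempty proper subsets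
of `[n]₀ = {0,...,n}` with `|S_{j+1}| = |S_j| + 1` for all `j`. -/
def IsB1 (n : ℕ) (A : Finset (Finset ℕ)) : Prop :=
  ∃ (l : ℕ) (S : ℕ → Finset ℕ),
    A = (Finset.range (l + 1)).image S ∧
    (∀ j, j ≤ l → (S j).Nonempty ∧ S j ⊂ Finset.range (n + 1)) ∧
    (∀ j, j < l → S j ⊂ S (j + 1) ∧ (S (j + 1)).card = (S j).card + 1)

/-- `π` is a permutation of `[n]₀` (a permutation of `ℕ` mapping `{0,...,n}` to itself). -/
def IsPermOn (n : ℕ) (π : Equiv.Perm ℕ) : Prop :=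
  ∀ i, i < n + 1 → π i < n + 1

/-- `A^π = {π(S) : S ∈ A}`, the elementwise image of the chain `A` under `π`. -/
def permImage (π : Equiv.Perm ℕ) (A : Finset (Finset ℕ)) : Finset (Finset ℕ) :=
  A.image fun S => S.image π

/-- The maximal chain `M = {{n−1,…,0}, …, {n−1,n−2}, {n−1}}`, i.e. the sets
`{j : m ≤ j ≤ n−1}` for `0 ≤ m ≤ n−1`. -/
def Mchain (n : ℕ) : Finset (Finset ℕ) :=
  (Finset.range n).image fun m => Finset.Icc m (n - 1)

/-- Membership in `𝓑₁^M = 𝓑₁ ∩ 𝒫(M)`. -/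
def InB1M (n : ℕ) (A : Finset (Finset ℕ)) : Prop :=
  IsB1 n A ∧ A ⊆ Mchain n

/-- Membership in `C₁`: `A` is a chain (with respect to inclusion) of nonempty proper
subsets of `[n]₀`. -/
def IsChain1 (n : ℕ) (A : Finset (Finset ℕ)) : Prop :=
  (∀ S ∈ A, S.Nonempty ∧ S ⊂ Finset.range (n + 1)) ∧
  ∀ S ∈ A, ∀ T ∈ A, S ⊆ T ∨ T ⊆ S

/-- `N ⊆ 𝓑₁` is a 1-nested set: the union of every family of at least two pairwise
incomparable members of `N` belongs to `C₁ − 𝓑₁`. -/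
def IsNested1 (n : ℕ) (N : Set (Finset (Finset ℕ))) : Prop :=
  (∀ A ∈ N, IsB1 n A) ∧
  ∀ W : Finset (Finset (Finset ℕ)), ↑W ⊆ N → 2 ≤ W.card →
    (∀ A ∈ W, ∀ B ∈ W, A ≠ B → ¬ A ⊆ B) →
    IsChain1 n (W.sup id) ∧ ¬ IsB1 n (W.sup id)

/-- A function `f` on `𝓔 ⊆ 𝓑₁` is proper when distinct members of `𝓔` of the same
colour never belong to a common 1-nested set. -/
def IsProperOn (n : ℕ) (E : Set (Finset (Finset ℕ))) (f : Finset (Finset ℕ) → ℕ) : Prop :=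
  ∀ A ∈ E, ∀ B ∈ E, A ≠ B → f A = f B →
    ∀ N : Set (Finset (Finset ℕ)), IsNested1 n N → ¬ (A ∈ N ∧ B ∈ N)

/-- A proper colouring of the `n`-dimensional simple permutoassociahedron with `m`
colours: a proper function `f : 𝓑₁ → {1,...,m}`. -/
def IsProperColouringPA (n m : ℕ) (f : Finset (Finset ℕ) → ℕ) : Prop :=
  (∀ A, IsB1 n A → f A ∈ Finset.Icc 1 m) ∧ IsProperOn n {A | IsB1 n A} f

/-- The chromatic number `δ_n` of the `n`-dimensional simple permutoassociahedron. -/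
noncomputable def paChromatic (n : ℕ) : ℕ :=
  sInf {m : ℕ | ∃ f : Finset (Finset ℕ) → ℕ, IsProperColouringPA n m f}

/-!
A member of `𝓑₁` is a chain whose cardinalities form an interval `[a, b] ⊆ [1, n]`, and two
distinct members `A`, `B` lie in a common 1-nested set iff they are comparable or `A ∪ B` is a
chain outside `𝓑₁`. Two members with the same interval cannot be nested together (a chain
`A ∪ B` would force `A = B`), nor can two whose intervals overlap or abut with neither containing
the other (then `A ∪ B` is never a chain outside `𝓑₁`). After the shift `[a, b] ↦ [a - 1, b - 1]`
the latter is the separation of segments of `[n - 1]₀`, so a colouring of segments plus one colour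
for the interval `[1, n]` colours `𝓑₁`. Conversely, the members of `𝓑₁` inside the maximal chain
`M` correspond to the segments of `[n - 1]₀` and are all contained in `M`, so a colouring of `𝓑₁`
restricts to the segments without using the colour of `M`.
-/

open Finset

theorem Finset.Icc_eq_Icc_iff {α : Type*} [PartialOrder α] [LocallyFiniteOrder α] {a b c d : α}
    (h : a ≤ b) : Icc a b = Icc c d ↔ a = c ∧ b = d := by
  rw [← coe_inj, coe_Icc, coe_Icc, Set.Icc_eq_Icc_iff h]

theorem Nat.image_sub_const_Icc {a b c : ℕ} (ha : c ≤ a) (hb : c ≤ b) :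
    (Icc a b).image (· - c) = Icc (a - c) (b - c) := by
  ext x
  simp only [mem_image, mem_Icc]
  constructor
  · rintro ⟨y, hy, rfl⟩
    omega
  · intro hx
    exact ⟨x + c, by omega, by omega⟩

def IsIcc (s : Finset ℕ) : Prop :=
  ∃ a b, a ≤ b ∧ s = Icc a b

theorem isIcc_Icc_union_Icc_iff {a b c d : ℕ} (hab : a ≤ b) (hcd : c ≤ d) (hac : a ≤ c)
    (hbd : b ≤ d) : IsIcc (Icc a b ∪ Icc c d) ↔ c ≤ b + 1 := by
  constructor
  · rintro ⟨e, f, -, h⟩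
    have ha : a ∈ Icc e f := h ▸ mem_union_left _ (mem_Icc.2 ⟨le_rfl, hab⟩)
    have hd : d ∈ Icc e f := h ▸ mem_union_right _ (mem_Icc.2 ⟨hcd, le_rfl⟩)
    rw [mem_Icc] at ha hd
    by_contra! hgap
    have : b + 1 ∈ Icc a b ∪ Icc c d := h ▸ mem_Icc.2 ⟨by omega, by omega⟩
    simp only [mem_union, mem_Icc] at this
    omega
  · intro h
    exact ⟨a, d, hab.trans hbd, by ext x; simp only [mem_union, mem_Icc]; omega⟩

theorem isIcc_image_const_sub_iff {n : ℕ} {U : Finset ℕ} (hU : U ⊆ range (n + 1)) :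
    IsIcc (U.image (n - ·)) ↔ IsIcc U := by
  have reflect : ∀ {V : Finset ℕ}, V ⊆ range (n + 1) → IsIcc V → IsIcc (V.image (n - ·)) := by
    rintro V hV ⟨a, b, hab, rfl⟩
    have hb : b < n + 1 := mem_range.1 (hV (mem_Icc.2 ⟨hab, le_rfl⟩))
    refine ⟨n - b, n - a, by omega, ?_⟩
    ext x
    simp only [mem_image, mem_Icc]
    constructor
    · rintro ⟨y, hy, rfl⟩
      omega
    · intro hx
      exact ⟨n - x, by omega, by omega⟩
  have hinv : (U.image (n - ·)).image (n - ·) = U := by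
    rw [image_image]
    conv_rhs => rw [← image_id (s := U)]
    exact image_congr fun x hx => Nat.sub_sub_self (Nat.lt_succ_iff.1 (mem_range.1 (hU hx)))
  refine ⟨fun h => hinv ▸ reflect ?_ h, reflect hU⟩
  intro x hx
  obtain ⟨y, -, rfl⟩ := mem_image.1 hx
  exact mem_range.2 (by omega)

theorem isSegment_Icc_iff {n a b : ℕ} :
    IsSegment n (Icc a b) ↔ a ≤ b ∧ b ≤ n ∧ ¬(a = 0 ∧ b = n) := by
  constructor
  · rintro ⟨a', b', hab', hb', h, hproper⟩
    obtain ⟨rfl, rfl⟩ := (Icc_eq_Icc_iff hab').1 h.symm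
    refine ⟨hab', hb', ?_⟩
    rintro ⟨rfl, rfl⟩
    exact hproper.ne (by ext x; simp only [mem_Icc, mem_range]; omega)
  · rintro ⟨hab, hb, hfull⟩
    refine ⟨a, b, hab, hb, rfl, (ssubset_iff_of_subset ?_).2 ?_⟩
    · intro x hx
      rw [mem_Icc] at hx
      exact mem_range.2 (by omega)
    · by_cases ha : a = 0
      · exact ⟨n, mem_range.2 n.lt_succ_self, by rw [mem_Icc]; omega⟩
      · exact ⟨0, mem_range.2 n.succ_pos, by rw [mem_Icc]; omega⟩

theorem segPrecedes_Icc_iff {n a b c d : ℕ} (hab : a ≤ b) (hcd : c ≤ d) (hb : b ≤ n)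
    (hd : d ≤ n) :
    SegPrecedes n (Icc a b) (Icc c d) ↔ a + 1 ≤ c ∧ c ≤ b + 1 ∧ b < d := by
  constructor
  · rintro ⟨a', b', c', d', -, -, -, -, h₁, h₂, h⟩
    obtain ⟨rfl, rfl⟩ := (Icc_eq_Icc_iff hab).1 h₁
    obtain ⟨rfl, rfl⟩ := (Icc_eq_Icc_iff hcd).1 h₂
    exact h
  · intro h
    exact ⟨a, b, c, d, hab, hb, hcd, hd, rfl, rfl, h⟩

theorem segSeparated_Icc_of_isIcc_union {n a b c d : ℕ} (hab : a ≤ b) (hcd : c ≤ d)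
    (hb : b ≤ n) (hd : d ≤ n) (h₁ : ¬Icc a b ⊆ Icc c d) (h₂ : ¬Icc c d ⊆ Icc a b)
    (h : IsIcc (Icc a b ∪ Icc c d)) : SegSeparated n (Icc a b) (Icc c d) := by
  rw [Icc_subset_Icc_iff hab] at h₁
  rw [Icc_subset_Icc_iff hcd] at h₂
  rcases le_total a c with hac | hca
  · have hcb := (isIcc_Icc_union_Icc_iff hab hcd hac (by omega)).1 h
    exact .inl ((segPrecedes_Icc_iff hab hcd hb hd).2 (by omega))
  · rw [union_comm] at h
    have had := (isIcc_Icc_union_Icc_iff hcd hab hca (by omega)).1 h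
    exact .inr ((segPrecedes_Icc_iff hcd hab hd hb).2 (by omega))

theorem exists_isProperColouringAssoc (n : ℕ) : ∃ m f, IsProperColouringAssoc n m f := by
  let code : Finset ℕ → ℕ := fun S => equivBitIndices.symm S + 1
  refine ⟨(range (n + 1)).powerset.sup code, code, fun S ⟨_, _, _, _, _, hS⟩ => ?_,
    fun S T _ _ hST h => absurd (equivBitIndices.symm.injective (Nat.succ_injective h)) hST⟩
  exact mem_Icc.2 ⟨le_add_self, le_sup (f := code) (mem_powerset.2 hS.subset)⟩

section Chains

variable {n : ℕ} {A B : Finset (Finset ℕ)}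

theorem IsChain1.eq_of_card_eq (hA : IsChain1 n A) {S T : Finset ℕ} (hS : S ∈ A) (hT : T ∈ A)
    (h : S.card = T.card) : S = T := by
  rcases hA.2 S hS T hT with hST | hTS
  · exact eq_of_subset_of_card_le hST h.ge
  · exact (eq_of_subset_of_card_le hTS h.le).symm

theorem IsChain1.eq_of_image_card_eq (h : IsChain1 n (A ∪ B))
    (hcard : A.image card = B.image card) : A = B := by
  have subset : ∀ {X Y : Finset (Finset ℕ)}, IsChain1 n (X ∪ Y) →
      X.image card = Y.image card → X ⊆ Y := by
    intro X Y hXY hc T hT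
    obtain ⟨U, hU, hUT⟩ := mem_image.1 (hc ▸ mem_image_of_mem card hT)
    rwa [hXY.eq_of_card_eq (mem_union_left _ hT) (mem_union_right _ hU) hUT.symm]
  exact (subset h hcard).antisymm (subset (union_comm A B ▸ h) hcard.symm)

theorem isB1_iff : IsB1 n A ↔ IsChain1 n A ∧ IsIcc (A.image card) := by
  constructor
  · rintro ⟨l, S, rfl, hS, hstep⟩
    have hmono : ∀ i j, i ≤ j → j ≤ l → S i ⊆ S j := by
      intro i j hij hjl
      induction j, hij using Nat.le_induction with
      | base => exact subset_rfl
      | succ k _ ih => exact (ih (by omega)).trans (hstep k (by omega)).1.subset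
    have hcard : ∀ j ≤ l, (S j).card = (S 0).card + j := by
      intro j hj
      induction j with
      | zero => rfl
      | succ k ih => rw [(hstep k (by omega)).2, ih (by omega)]; omega
    refine ⟨⟨?_, ?_⟩, (S 0).card, (S 0).card + l, by omega, ?_⟩
    · simp only [mem_image, mem_range]
      rintro _ ⟨j, hj, rfl⟩
      exact hS j (by omega)
    · simp only [mem_image, mem_range]
      rintro _ ⟨i, hi, rfl⟩ _ ⟨j, hj, rfl⟩
      rcases le_total i j with h | h
      exacts [.inl (hmono i j h (by omega)), .inr (hmono j i h (by omega))]
    · ext c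
      simp only [image_image, mem_image, mem_range, mem_Icc, Function.comp]
      constructor
      · rintro ⟨j, hj, rfl⟩
        rw [hcard j (by omega)]
        omega
      · intro hc
        exact ⟨c - (S 0).card, by omega, by rw [hcard _ (by omega)]; omega⟩
  · rintro ⟨hA, a, b, hab, hcards⟩
    have hmem : ∀ j, ∃ T : Finset ℕ, j ≤ b - a → T ∈ A ∧ T.card = a + j := by
      intro j
      by_cases hj : j ≤ b - a
      · have : a + j ∈ A.image card := by rw [hcards, mem_Icc]; omega
        obtain ⟨T, hT, hc⟩ := mem_image.1 this
        exact ⟨T, fun _ => ⟨hT, hc⟩⟩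
      · exact ⟨∅, fun h => absurd h hj⟩
    choose S hS using hmem
    refine ⟨b - a, S, ?_, fun j hj => hA.1 _ (hS j hj).1, fun j hj => ?_⟩
    · ext T
      simp only [mem_image, mem_range]
      constructor
      · intro hT
        have hc : T.card ∈ Icc a b := hcards ▸ mem_image_of_mem card hT
        rw [mem_Icc] at hc
        obtain ⟨hmemT, hcT⟩ := hS (T.card - a) (by omega)
        exact ⟨T.card - a, by omega, hA.eq_of_card_eq hmemT hT (by omega)⟩
      · rintro ⟨j, hj, rfl⟩
        exact (hS j (by omega)).1
    · obtain ⟨hj, hcj⟩ := hS j (by omega)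
      obtain ⟨hj', hcj'⟩ := hS (j + 1) (by omega)
      have hsub : S j ⊆ S (j + 1) := (hA.2 _ hj _ hj').resolve_right fun h => by
        have := card_le_card h
        omega
      exact ⟨Finset.ssubset_iff_subset_ne.2 ⟨hsub, fun h => by rw [h] at hcj; omega⟩, by omega⟩

theorem IsB1.isChain1 (hA : IsB1 n A) : IsChain1 n A :=
  (isB1_iff.1 hA).1

theorem IsB1.exists_image_card_eq (hA : IsB1 n A) :
    ∃ a b, 1 ≤ a ∧ a ≤ b ∧ b ≤ n ∧ A.image card = Icc a b := by
  obtain ⟨hA, a, b, hab, hcards⟩ := isB1_iff.1 hA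
  have hbounds : ∀ c ∈ Icc a b, 1 ≤ c ∧ c ≤ n := by
    rw [← hcards]
    intro c hc
    obtain ⟨S, hS, rfl⟩ := mem_image.1 hc
    have hlt := card_lt_card (hA.1 S hS).2
    rw [card_range] at hlt
    exact ⟨card_pos.2 (hA.1 S hS).1, by omega⟩
  exact ⟨a, b, (hbounds a (mem_Icc.2 ⟨le_rfl, hab⟩)).1, hab,
    (hbounds b (mem_Icc.2 ⟨hab, le_rfl⟩)).2, hcards⟩

theorem IsNested1.mono {N N' : Set (Finset (Finset ℕ))} (hN : IsNested1 n N) (h : N' ⊆ N) :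
    IsNested1 n N' :=
  ⟨fun A hA => hN.1 A (h hA), fun W hW => hN.2 W (hW.trans h)⟩

theorem isNested1_pair_iff (hA : IsB1 n A) (hB : IsB1 n B) (hAB : A ≠ B) :
    IsNested1 n {A, B} ↔ A ⊆ B ∨ B ⊆ A ∨ (IsChain1 n (A ∪ B) ∧ ¬IsB1 n (A ∪ B)) := by
  have hsup : ({A, B} : Finset (Finset (Finset ℕ))).sup id = A ∪ B := by simp
  constructor
  · intro hN
    by_contra! h
    have hinc : ∀ X ∈ ({A, B} : Finset (Finset (Finset ℕ))), ∀ Y ∈ ({A, B} : Finset _),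
        X ≠ Y → ¬X ⊆ Y := by
      simp only [mem_insert, mem_singleton]
      rintro X (rfl | rfl) Y (rfl | rfl) hXY
      exacts [absurd rfl hXY, h.1, h.2.1, absurd rfl hXY]
    have := hN.2 {A, B} (by simp) (by rw [card_pair hAB]) hinc
    rw [hsup] at this
    exact this.2 (h.2.2 this.1)
  · intro h
    refine ⟨by rintro X (rfl | rfl); exacts [hA, hB], fun W hW hcard hinc => ?_⟩
    obtain rfl : W = {A, B} := by
      refine eq_of_subset_of_card_le (fun X hX => ?_) (by rwa [card_pair hAB])
      simpa using hW hX
    rw [hsup]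
    rcases h with h | h | h
    · exact absurd h (hinc A (by simp) B (by simp) hAB)
    · exact absurd h (hinc B (by simp) A (by simp) hAB.symm)
    · exact h

theorem isProperOn_iff {E : Set (Finset (Finset ℕ))} {f : Finset (Finset ℕ) → ℕ} :
    IsProperOn n E f ↔ ∀ A ∈ E, ∀ B ∈ E, A ≠ B → f A = f B → ¬IsNested1 n {A, B} := by
  refine ⟨fun hf A hA B hB hAB hfAB hN => hf A hA B hB hAB hfAB _ hN ⟨.inl rfl, .inr rfl⟩, ?_⟩
  rintro hf A hA B hB hAB hfAB N hN ⟨hAN, hBN⟩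
  exact hf A hA B hB hAB hfAB
    (hN.mono (Set.insert_subset_iff.2 ⟨hAN, Set.singleton_subset_iff.2 hBN⟩))

end Chains

section UpperBound

variable {n α : ℕ} {g : Finset ℕ → ℕ} {A B : Finset (Finset ℕ)}

theorem not_isNested1_pair_of_image_card_eq (hA : IsB1 n A) (hB : IsB1 n B) (hAB : A ≠ B)
    (h : A.image card = B.image card) : ¬IsNested1 n {A, B} := by
  rw [isNested1_pair_iff hA hB hAB]
  intro hN
  refine hAB (IsChain1.eq_of_image_card_eq (n := n) ?_ h)
  rcases hN with hsub | hsub | ⟨hchain, -⟩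
  · rw [union_eq_right.2 hsub]
    exact hB.isChain1
  · rw [union_eq_left.2 hsub]
    exact hA.isChain1
  · exact hchain

theorem not_isNested1_pair_of_image_card_adjacent (hA : IsB1 n A) (hB : IsB1 n B)
    {a b c d : ℕ} (hA' : A.image card = Icc a b) (hB' : B.image card = Icc c d) (hab : a ≤ b)
    (hac : a < c) (hcb : c ≤ b + 1) (hbd : b < d) : ¬IsNested1 n {A, B} := by
  have hAB : A ≠ B := by
    rintro rfl
    have := (Icc_eq_Icc_iff hab).1 (hA'.symm.trans hB')
    omega
  rw [isNested1_pair_iff hA hB hAB]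
  rintro (hsub | hsub | ⟨hchain, hnot⟩)
  · have := image_subset_image (f := card) hsub
    rw [hA', hB', Icc_subset_Icc_iff hab] at this
    omega
  · have := image_subset_image (f := card) hsub
    rw [hA', hB', Icc_subset_Icc_iff (by omega)] at this
    omega
  · refine hnot (isB1_iff.2 ⟨hchain, ?_⟩)
    rw [image_union, hA', hB']
    exact (isIcc_Icc_union_Icc_iff hab (by omega) hac.le hbd.le).2 hcb

/-- The colour given to the members of `𝓑₁` whose cardinalities form the interval `[a, b]`. -/
def intervalColour (n α : ℕ) (g : Finset ℕ → ℕ) (a b : ℕ) : ℕ :=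
  if a = 1 ∧ b = n then α + 1 else g (Icc (a - 1) (b - 1))

def liftColouring (n α : ℕ) (g : Finset ℕ → ℕ) (A : Finset (Finset ℕ)) : ℕ :=
  if A.image card = Icc 1 n then α + 1 else g ((A.image card).image (· - 1))

theorem liftColouring_eq_intervalColour {a b : ℕ}
    (h : A.image card = Icc a b) (ha : 1 ≤ a) (hab : a ≤ b) :
    liftColouring n α g A = intervalColour n α g a b := by
  simp only [liftColouring, intervalColour, h, Icc_eq_Icc_iff hab,
    Nat.image_sub_const_Icc ha (ha.trans hab)]

theorem isSegment_Icc_sub_one {a b : ℕ} (ha : 1 ≤ a) (hab : a ≤ b) (hb : b ≤ n)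
    (hfull : ¬(a = 1 ∧ b = n)) : IsSegment (n - 1) (Icc (a - 1) (b - 1)) :=
  isSegment_Icc_iff.2 ⟨by omega, by omega, by omega⟩

theorem intervalColour_mem_Icc (hg : IsProperColouringAssoc (n - 1) α g) {a b : ℕ} (ha : 1 ≤ a)
    (hab : a ≤ b) (hb : b ≤ n) : intervalColour n α g a b ∈ Icc 1 (α + 1) := by
  rw [intervalColour]
  split_ifs with hfull
  · exact mem_Icc.2 ⟨le_add_self, le_rfl⟩
  · have := mem_Icc.1 (hg.1 _ (isSegment_Icc_sub_one ha hab hb hfull))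
    exact mem_Icc.2 ⟨this.1, by omega⟩

theorem intervalColour_eq_cases (hg : IsProperColouringAssoc (n - 1) α g) {a b c d : ℕ}
    (ha : 1 ≤ a) (hab : a ≤ b) (hb : b ≤ n) (hc : 1 ≤ c) (hcd : c ≤ d) (hd : d ≤ n)
    (h : intervalColour n α g a b = intervalColour n α g c d) :
    (a = c ∧ b = d) ∨ (a < c ∧ c ≤ b + 1 ∧ b < d) ∨ (c < a ∧ a ≤ d + 1 ∧ d < b) := by
  have hsegA := isSegment_Icc_sub_one ha hab hb
  have hsegB := isSegment_Icc_sub_one hc hcd hd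
  rw [intervalColour, intervalColour] at h
  split_ifs at h with hfA hfB hfB
  · omega
  · have := mem_Icc.1 (hg.1 _ (hsegB hfB))
    omega
  · have := mem_Icc.1 (hg.1 _ (hsegA hfA))
    omega
  · by_cases heq : Icc (a - 1) (b - 1) = Icc (c - 1) (d - 1)
    · have := (Icc_eq_Icc_iff (by omega)).1 heq
      omega
    · rcases hg.2 _ _ (hsegA hfA) (hsegB hfB) heq h with hp | hp
      · rw [segPrecedes_Icc_iff (by omega) (by omega) (by omega) (by omega)] at hp
        omega
      · rw [segPrecedes_Icc_iff (by omega) (by omega) (by omega) (by omega)] at hp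
        omega

theorem isProperColouringPA_liftColouring (hg : IsProperColouringAssoc (n - 1) α g) :
    IsProperColouringPA n (α + 1) (liftColouring n α g) := by
  refine ⟨fun A hA => ?_, isProperOn_iff.2 fun A hA B hB hAB hfAB => ?_⟩
  · obtain ⟨a, b, ha, hab, hb, hA'⟩ := hA.exists_image_card_eq
    rw [liftColouring_eq_intervalColour hA' ha hab]
    exact intervalColour_mem_Icc hg ha hab hb
  · obtain ⟨a, b, ha, hab, hb, hA'⟩ := IsB1.exists_image_card_eq hA
    obtain ⟨c, d, hc, hcd, hd, hB'⟩ := IsB1.exists_image_card_eq hB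
    rw [liftColouring_eq_intervalColour hA' ha hab, liftColouring_eq_intervalColour hB' hc hcd]
      at hfAB
    rcases intervalColour_eq_cases hg ha hab hb hc hcd hd hfAB with ⟨rfl, rfl⟩ | h | h
    · exact not_isNested1_pair_of_image_card_eq hA hB hAB (hA'.trans hB'.symm)
    · exact not_isNested1_pair_of_image_card_adjacent hA hB hA' hB' hab h.1 h.2.1 h.2.2
    · rw [Set.pair_comm]
      exact not_isNested1_pair_of_image_card_adjacent hB hA hB' hA' hcd h.1 h.2.1 h.2.2

end UpperBound

section LowerBound

variable {n : ℕ} {U V : Finset ℕ}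

/-- The member of `𝓑₁` inside `M` that corresponds to a segment `U` of `[n - 1]₀`. -/
def toChain (n : ℕ) (U : Finset ℕ) : Finset (Finset ℕ) :=
  U.image fun i => Icc i (n - 1)

theorem mchain_eq_toChain : Mchain n = toChain n (range n) :=
  rfl

theorem card_Icc_sub_one {i : ℕ} (hi : i < n) : (Icc i (n - 1)).card = n - i := by
  rw [Nat.card_Icc]
  omega

theorem injOn_Icc_sub_one : Set.InjOn (fun i => Icc i (n - 1)) (range n : Set ℕ) := by
  intro i hi j hj h
  have := congrArg card h
  rw [coe_range, Set.mem_Iio] at hi hj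
  simp only [card_Icc_sub_one hi, card_Icc_sub_one hj] at this
  omega

theorem toChain_subset_toChain_iff (hU : U ⊆ range n) (hV : V ⊆ range n) :
    toChain n U ⊆ toChain n V ↔ U ⊆ V :=
  image_subset_image_iff_of_injOn injOn_Icc_sub_one hU hV

theorem toChain_injOn (hU : U ⊆ range n) (hV : V ⊆ range n) (h : toChain n U = toChain n V) :
    U = V :=
  (image_eq_image_iff_of_injOn injOn_Icc_sub_one hU hV).1 h

theorem image_card_toChain (hU : U ⊆ range n) : (toChain n U).image card = U.image (n - ·) := by
  rw [toChain, image_image]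
  exact image_congr fun i hi => card_Icc_sub_one (mem_range.1 (hU hi))

theorem isChain1_toChain (hU : U ⊆ range n) : IsChain1 n (toChain n U) := by
  simp only [IsChain1, toChain, forall_mem_image]
  refine ⟨fun i hi => ?_, fun i _ j _ => ?_⟩
  · have hi := mem_range.1 (hU hi)
    have hsub : Icc i (n - 1) ⊆ range (n + 1) := fun x hx => by
      rw [mem_Icc] at hx
      exact mem_range.2 (by omega)
    refine ⟨nonempty_Icc.2 (by omega), (ssubset_iff_of_subset hsub).2 ⟨n, ?_, ?_⟩⟩
    · exact mem_range.2 n.lt_succ_self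
    · rw [mem_Icc]
      omega
  · rcases le_total j i with h | h
    exacts [.inl (Icc_subset_Icc_left h), .inr (Icc_subset_Icc_left h)]

theorem isB1_toChain_iff (hU : U ⊆ range n) : IsB1 n (toChain n U) ↔ IsIcc U := by
  rw [isB1_iff, image_card_toChain hU,
    isIcc_image_const_sub_iff (hU.trans (range_subset_range.2 n.le_succ))]
  exact and_iff_right (isChain1_toChain hU)

theorem IsSegment.ssubset_range (hn : 1 ≤ n) {S : Finset ℕ} (hS : IsSegment (n - 1) S) :
    S ⊂ range n := by
  obtain ⟨-, -, -, -, -, h⟩ := hS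
  rwa [Nat.sub_add_cancel hn] at h

theorem IsSegment.isB1_toChain (hn : 1 ≤ n) {S : Finset ℕ} (hS : IsSegment (n - 1) S) :
    IsB1 n (toChain n S) := by
  have hSn := (hS.ssubset_range hn).subset
  obtain ⟨a, b, hab, -, rfl, -⟩ := hS
  exact (isB1_toChain_iff hSn).2 ⟨a, b, hab, rfl⟩

theorem isB1_mchain (hn : 1 ≤ n) : IsB1 n (Mchain n) :=
  (isB1_toChain_iff subset_rfl).2 ⟨0, n - 1, Nat.zero_le _, by ext; simp; omega⟩

variable {m : ℕ} {f : Finset (Finset ℕ) → ℕ}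

theorem IsProperOn.incomparable_of_apply_eq (hf : IsProperOn n {A | IsB1 n A} f)
    {A B : Finset (Finset ℕ)} (hA : IsB1 n A) (hB : IsB1 n B) (hAB : A ≠ B) (h : f A = f B) :
    ¬A ⊆ B ∧ ¬B ⊆ A ∧ (IsChain1 n (A ∪ B) → IsB1 n (A ∪ B)) := by
  have := (isNested1_pair_iff hA hB hAB).not.1 (isProperOn_iff.1 hf A hA B hB hAB h)
  push Not at this
  exact this

theorem IsProperOn.apply_toChain_ne (hn : 1 ≤ n) (hf : IsProperOn n {A | IsB1 n A} f)
    {S : Finset ℕ} (hS : IsSegment (n - 1) S) : f (toChain n S) ≠ f (Mchain n) := by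
  intro h
  have hlt : toChain n S ⊂ Mchain n := by
    have hsub := hS.ssubset_range hn
    rw [mchain_eq_toChain, ssubset_iff_subset_ne,
      toChain_subset_toChain_iff hsub.subset subset_rfl]
    exact ⟨hsub.subset, fun heq => hsub.ne (toChain_injOn hsub.subset subset_rfl heq)⟩
  exact (hf.incomparable_of_apply_eq (hS.isB1_toChain hn) (isB1_mchain hn) hlt.ne h).1
    hlt.subset

theorem IsProperOn.segSeparated (hn : 1 ≤ n) (hf : IsProperOn n {A | IsB1 n A} f)
    {S T : Finset ℕ} (hS : IsSegment (n - 1) S) (hT : IsSegment (n - 1) T) (hST : S ≠ T)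
    (h : f (toChain n S) = f (toChain n T)) : SegSeparated (n - 1) S T := by
  have hSn := (hS.ssubset_range hn).subset
  have hTn := (hT.ssubset_range hn).subset
  obtain ⟨hnotST, hnotTS, hunion⟩ := hf.incomparable_of_apply_eq (hS.isB1_toChain hn)
    (hT.isB1_toChain hn) (fun heq => hST (toChain_injOn hSn hTn heq)) h
  rw [toChain_subset_toChain_iff hSn hTn] at hnotST
  rw [toChain_subset_toChain_iff hTn hSn] at hnotTS
  have hchain := isChain1_toChain (union_subset hSn hTn)
  rw [toChain, image_union] at hchain
  have hIcc := (isB1_toChain_iff (union_subset hSn hTn)).1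
    (by rw [toChain, image_union]; exact hunion hchain)
  obtain ⟨a, b, hab, hb, rfl, -⟩ := hS
  obtain ⟨c, d, hcd, hd, rfl, -⟩ := hT
  exact segSeparated_Icc_of_isIcc_union hab hcd hb hd hnotST hnotTS hIcc

/-- The transposition moves the colour `m` onto the colour of `M`, which no segment uses. -/
def restrictColouring (n m : ℕ) (f : Finset (Finset ℕ) → ℕ) (S : Finset ℕ) : ℕ :=
  Equiv.swap (f (Mchain n)) m (f (toChain n S))

theorem IsProperColouringPA.one_le (hn : 1 ≤ n) (hf : IsProperColouringPA n m f) : 1 ≤ m := by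
  have := mem_Icc.1 (hf.1 _ (isB1_mchain hn))
  omega

theorem IsProperColouringPA.isProperColouringAssoc_restrictColouring (hn : 1 ≤ n)
    (hf : IsProperColouringPA n m f) :
    IsProperColouringAssoc (n - 1) (m - 1) (restrictColouring n m f) := by
  refine ⟨fun S hS => ?_, fun S T hS hT hST h => hf.2.segSeparated hn hS hT hST
    ((Equiv.swap _ _).injective h)⟩
  have hS' := mem_Icc.1 (hf.1 _ (hS.isB1_toChain hn))
  have hM := mem_Icc.1 (hf.1 _ (isB1_mchain hn))
  have hne := hf.2.apply_toChain_ne hn hS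
  rw [restrictColouring, mem_Icc]
  rcases eq_or_ne (f (toChain n S)) m with hm | hm
  · rw [hm, Equiv.swap_apply_right]
    omega
  · rw [Equiv.swap_apply_of_ne_of_ne hne hm]
    omega

end LowerBound

/-- Theorem: `δ_n = α_{n−1} + 1` for every `n ≥ 2`. -/
theorem paChromatic_eq (n : ℕ) (hn : 2 ≤ n) :
    paChromatic n = assocChromatic (n - 1) + 1 := by
  obtain ⟨g, hg⟩ : ∃ g, IsProperColouringAssoc (n - 1) (assocChromatic (n - 1)) g :=
    Nat.sInf_mem (exists_isProperColouringAssoc (n - 1))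
  have hpa := isProperColouringPA_liftColouring hg
  have hle : paChromatic n ≤ assocChromatic (n - 1) + 1 := Nat.sInf_le ⟨_, hpa⟩
  obtain ⟨f, hf⟩ : ∃ f, IsProperColouringPA n (paChromatic n) f :=
    Nat.sInf_mem (s := {m | ∃ f, IsProperColouringPA n m f}) ⟨_, _, hpa⟩
  have hge : assocChromatic (n - 1) ≤ paChromatic n - 1 :=
    Nat.sInf_le ⟨_, hf.isProperColouringAssoc_restrictColouring (by omega)⟩
  have := hf.one_le (by omega)
  omega
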